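/- If I_{N+1} = ⟨π^{N+1}·ν(Q_{≤N+1}), Q_{>N+1}⟩ holds in K{X}°, then dividing by π^{N+1} and reducing modulo π yields Ī_{N+1} = ⟨ρ(Q_{≤N+1})⟩ as an ideal of k[X]. -/

import Mathlib

open MvPowerSeries

namespace TateStmt

variable {n : ℕ} {O : Type*} [CommRing O]

/-- The Tate condition: the (π-adic) valuations of the coefficients tend to infinity. -/
def IsTate (π : O) (f : MvPowerSeries (Fin n) O) : Prop :=
  ∀ N : ℕ, {i : Fin n →₀ ℕ | ¬ π ^ N ∣ MvPowerSeries.coeff i f}.Finite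

/-- The integral Tate algebra `K{X}°`, as a subring of the ring of formal power series
over the valuation ring `O = K°`. -/
def TateAlgebra (n : ℕ) (O : Type*) [CommRing O] (π : O) :
    Subring (MvPowerSeries (Fin n) O) where
  carrier := {f | IsTate π f}
  zero_mem' := by
    intro N
    apply Set.Finite.subset (Set.finite_empty)
    intro i hi
    exact hi (Dvd.intro 0 (by simp))
  one_mem' := by
    intro N
    apply Set.Finite.subset (Set.finite_singleton (0 : Fin n →₀ ℕ))
    intro i hi
    by_contra h
    rw [Set.mem_singleton_iff] at h
    apply hi
    rw [MvPowerSeries.coeff_one, if_neg h]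
    exact Dvd.intro 0 (by simp)
  add_mem' := by
    intro f g hf hg N
    apply Set.Finite.subset ((hf N).union (hg N))
    intro i hi
    by_contra h
    simp only [Set.mem_union, Set.mem_setOf_eq, not_or, not_not] at h
    exact hi (by rw [map_add]; exact dvd_add h.1 h.2)
  neg_mem' := by
    intro f hf N
    apply Set.Finite.subset (hf N)
    intro i hi
    by_contra h
    simp only [Set.mem_setOf_eq, not_not] at h
    exact hi (by rw [map_neg]; exact (dvd_neg).mpr h)
  mul_mem' := by
    intro f g hf hg N
    apply Set.Finite.subset (Set.Finite.add (hf N) (hg N))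
    intro i hi
    by_contra h
    apply hi
    rw [MvPowerSeries.coeff_mul]
    apply Finset.dvd_sum
    intro p hp
    rw [Finset.HasAntidiagonal.mem_antidiagonal] at hp
    by_cases h1 : π ^ N ∣ MvPowerSeries.coeff p.1 f
    · exact Dvd.dvd.mul_right h1 _
    · by_cases h2 : π ^ N ∣ MvPowerSeries.coeff p.2 g
      · exact Dvd.dvd.mul_left h2 _
      · exact absurd (hp ▸ Set.add_mem_add h1 h2) h

/-- Tate monomials `π^a X^i`, identified with pairs `(a, i) ∈ ℕ × ℕ^n`. -/
abbrev TMon (n : ℕ) := ℕ × (Fin n →₀ ℕ)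

noncomputable def monMul (a b : TMon n) : TMon n := (a.1 + b.1, a.2 + b.2)
def monDvd (a b : TMon n) : Prop := a.1 ≤ b.1 ∧ a.2 ≤ b.2
noncomputable def monDiv (a b : TMon n) : TMon n := (a.1 - b.1, a.2 - b.2)
noncomputable def monLcm (a b : TMon n) : TMon n := (max a.1 b.1, a.2 ⊔ b.2)

/-- The valuation-first term order: compare valuations first (a *smaller* valuation gives a
*larger* term), then exponents via the monomial order `mo`. -/
def termLT (mo : MonomialOrder (Fin n)) (a b : TMon n) : Prop :=
  b.1 < a.1 ∨ (a.1 = b.1 ∧ mo.toSyn a.2 < mo.toSyn b.2)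

def termLE (mo : MonomialOrder (Fin n)) (a b : TMon n) : Prop :=
  a = b ∨ termLT mo a b

/-- Order on `Option (TMon n)`, where `none` (the "monomial" of `0`) is smallest. -/
def optLT (mo : MonomialOrder (Fin n)) : Option (TMon n) → Option (TMon n) → Prop
  | none, none => False
  | none, some _ => True
  | some _, none => False
  | some a, some b => termLT mo a b

def optLE (mo : MonomialOrder (Fin n)) (a b : Option (TMon n)) : Prop :=
  a = b ∨ optLT mo a b

noncomputable def optMul (t : TMon n) : Option (TMon n) → Option (TMon n)
  | none => none
  | some a => some (monMul t a)

/-- `(a, i)` is (the monomial of) a term of `f`: the coefficient of `X^i` has valuation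
exactly `a`. -/
def IsTerm (π : O) (f : MvPowerSeries (Fin n) O) (m : TMon n) : Prop :=
  π ^ m.1 ∣ MvPowerSeries.coeff m.2 f ∧ ¬ π ^ (m.1 + 1) ∣ MvPowerSeries.coeff m.2 f

/-- `m` is the leading monomial of `f`. -/
def IsLM (π : O) (mo : MonomialOrder (Fin n)) (f : MvPowerSeries (Fin n) O) (m : TMon n) :
    Prop :=
  IsTerm π f m ∧ ∀ m', IsTerm π f m' → termLE mo m' m

/-- `s` is the leading monomial of `f`, with the convention `LM 0 = none`. -/
def IsLMopt (π : O) (mo : MonomialOrder (Fin n)) (f : MvPowerSeries (Fin n) O) :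
    Option (TMon n) → Prop
  | none => f = 0
  | some m => IsLM π mo f m

/-- All coefficients of `f` are divisible by `π^N`, i.e. `val f ≥ N`. -/
def DvdAll (π : O) (N : ℕ) (f : MvPowerSeries (Fin n) O) : Prop :=
  ∀ i, π ^ N ∣ MvPowerSeries.coeff i f

/-- The Gauss valuation of `f` is exactly `N`. -/
def ValEq (π : O) (f : MvPowerSeries (Fin n) O) (N : ℕ) : Prop :=
  DvdAll π N f ∧ ¬ DvdAll π (N + 1) f

/-- `G` is a Gröbner basis of the ideal `I` of the (integral) Tate algebra. -/
def IsGB (π : O) (mo : MonomialOrder (Fin n)) (G : Set (TateAlgebra n O π))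
    (I : Ideal (TateAlgebra n O π)) : Prop :=
  (∀ g ∈ G, g ∈ I) ∧
    ∀ f ∈ I, (f : MvPowerSeries (Fin n) O) ≠ 0 → ∀ mf,
      IsLM π mo (f : MvPowerSeries (Fin n) O) mf →
        ∃ g ∈ G, ∃ mg, IsLM π mo (g : MvPowerSeries (Fin n) O) mg ∧ monDvd mg mf

/-- The module `M = {(u,v) : u f - v ∈ I₀}`. -/
def SigMod {π : O} (I0 : Ideal (TateAlgebra n O π)) (f : TateAlgebra n O π) :
    Set (TateAlgebra n O π × TateAlgebra n O π) :=
  {p | p.1 * f - p.2 ∈ I0}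

/-- `p = (u₁,v₁)` is top-reducible by `q = (u₂,v₂)`. -/
def TopRed (π : O) (mo : MonomialOrder (Fin n))
    (p q : TateAlgebra n O π × TateAlgebra n O π) : Prop :=
  (q.2 = 0 ∧ ∃ mu mq, IsLM π mo (p.1 : MvPowerSeries (Fin n) O) mu ∧
      IsLM π mo (q.1 : MvPowerSeries (Fin n) O) mq ∧ monDvd mq mu)
  ∨ (p.2 ≠ 0 ∧ q.2 ≠ 0 ∧
      ∃ m1 m2, IsLM π mo (p.2 : MvPowerSeries (Fin n) O) m1 ∧
        IsLM π mo (q.2 : MvPowerSeries (Fin n) O) m2 ∧ monDvd m2 m1 ∧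
        ∃ s1 s2, IsLMopt π mo (p.1 : MvPowerSeries (Fin n) O) s1 ∧
          IsLMopt π mo (q.1 : MvPowerSeries (Fin n) O) s2 ∧
          optLE mo (optMul (monDiv m1 m2) s2) s1)

/-- `G` is a strong Gröbner basis of the module `M = SigMod I0 f`. -/
def IsSGB (π : O) (mo : MonomialOrder (Fin n)) (I0 : Ideal (TateAlgebra n O π))
    (f : TateAlgebra n O π) (G : Set (TateAlgebra n O π × TateAlgebra n O π)) : Prop :=
  G.Finite ∧ G ⊆ SigMod I0 f ∧
    ∀ p ∈ SigMod I0 f, p ≠ 0 → ∃ q ∈ G, TopRed π mo p q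

/-- `p` is covered by `q`. -/
def Covers (π : O) (mo : MonomialOrder (Fin n))
    (q p : TateAlgebra n O π × TateAlgebra n O π) : Prop :=
  ∃ mu mq, IsLM π mo (p.1 : MvPowerSeries (Fin n) O) mu ∧
    IsLM π mo (q.1 : MvPowerSeries (Fin n) O) mq ∧ monDvd mq mu ∧
    ∃ sv sp, IsLMopt π mo (q.2 : MvPowerSeries (Fin n) O) sv ∧
      IsLMopt π mo (p.2 : MvPowerSeries (Fin n) O) sp ∧
      optLT mo (optMul (monDiv mu mq) sv) sp

def CoveredBy (π : O) (mo : MonomialOrder (Fin n))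
    (p : TateAlgebra n O π × TateAlgebra n O π)
    (G : Set (TateAlgebra n O π × TateAlgebra n O π)) : Prop :=
  ∃ q ∈ G, Covers π mo q p

/-- The Tate series `π^a X^i`, as an element of the Tate algebra. -/
noncomputable def monTA (π : O) (m : TMon n) : TateAlgebra n O π :=
  ⟨MvPowerSeries.monomial m.2 (π ^ m.1), by
    intro N
    apply Set.Finite.subset (Set.finite_singleton m.2)
    intro i hi
    by_contra h
    rw [Set.mem_singleton_iff] at h
    apply hi
    rw [MvPowerSeries.coeff_monomial, if_neg h]
    exact Dvd.intro 0 (by simp)⟩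

noncomputable def smulPair (π : O) (m : TMon n) (p : TateAlgebra n O π × TateAlgebra n O π) :
    TateAlgebra n O π × TateAlgebra n O π :=
  (monTA π m * p.1, monTA π m * p.2)

/-- `r` is the J-pair of `(p, q)` (with `p` carrying the larger signature part). -/
def IsJPair (π : O) (mo : MonomialOrder (Fin n))
    (p q r : TateAlgebra n O π × TateAlgebra n O π) : Prop :=
  ∃ m1 m2, IsLM π mo (p.2 : MvPowerSeries (Fin n) O) m1 ∧
    IsLM π mo (q.2 : MvPowerSeries (Fin n) O) m2 ∧
    (∃ s1 s2, IsLMopt π mo (p.1 : MvPowerSeries (Fin n) O) s1 ∧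
      IsLMopt π mo (q.1 : MvPowerSeries (Fin n) O) s2 ∧
      optLT mo (optMul (monDiv (monLcm m1 m2) m2) s2)
        (optMul (monDiv (monLcm m1 m2) m1) s1)) ∧
    r = smulPair π (monDiv (monLcm m1 m2) m1) p

section Residue

variable {k : Type*} [Field k]

/-- `P = ρ(f)`, the reduction mod `π` of `π^{-val f} f`. -/
def IsRho (π : O) (φ : O →+* k) (f : MvPowerSeries (Fin n) O)
    (P : MvPolynomial (Fin n) k) : Prop :=
  ∃ (N : ℕ) (g : MvPowerSeries (Fin n) O), f = (π ^ N) • g ∧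
    (∃ i, ¬ π ∣ MvPowerSeries.coeff i g) ∧
    ∀ i, MvPolynomial.coeff i P = φ (MvPowerSeries.coeff i g)

def rhoSet (π : O) (φ : O →+* k) (S : Set (TateAlgebra n O π)) :
    Set (MvPolynomial (Fin n) k) :=
  {P | ∃ f ∈ S, IsRho π φ (f : MvPowerSeries (Fin n) O) P}

/-- `Ī_N`: the image in `k[X]` of `π^{-N} (I ∩ π^N K{X}°)`. -/
def BarIdeal (π : O) (φ : O →+* k) (I : Ideal (TateAlgebra n O π)) (N : ℕ) :
    Set (MvPolynomial (Fin n) k) :=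
  {P | ∃ f ∈ I, ∃ g : MvPowerSeries (Fin n) O, (f : MvPowerSeries (Fin n) O) = (π ^ N) • g ∧
    ∀ i, MvPolynomial.coeff i P = φ (MvPowerSeries.coeff i g)}

/-- `d` is the leading exponent of the polynomial `P` for the monomial order `mo`. -/
def IsPolyLM (mo : MonomialOrder (Fin n)) (P : MvPolynomial (Fin n) k)
    (d : Fin n →₀ ℕ) : Prop :=
  MvPolynomial.coeff d P ≠ 0 ∧ ∀ e, MvPolynomial.coeff e P ≠ 0 → mo.toSyn e ≤ mo.toSyn d

/-- `G` is a Gröbner basis of the set (ideal) `J` of polynomials over the residue field. -/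
def IsPolyGB (mo : MonomialOrder (Fin n)) (G : Set (MvPolynomial (Fin n) k))
    (J : Set (MvPolynomial (Fin n) k)) : Prop :=
  G ⊆ J ∧ ∀ P ∈ J, P ≠ 0 → ∀ d, IsPolyLM mo P d →
    ∃ Q ∈ G, ∃ e, IsPolyLM mo Q e ∧ e ≤ d

end Residue

end TateStmt


open TateStmt MvPowerSeries

variable {n : ℕ} {O k : Type*} [CommRing O] [IsDomain O] [IsDiscreteValuationRing O] [Field k]

/-- `Q_{≤N}`: the elements of `Q_all` of valuation at most `N`. -/
def Qle (π : O) (Qall : Set (TateAlgebra n O π)) (N : ℕ) : Set (TateAlgebra n O π) :=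
  {f ∈ Qall | ∃ M ≤ N, ValEq π (f : MvPowerSeries (Fin n) O) M}

/-- `Q_{>N}`: the elements of `Q_all` of valuation greater than `N`. -/
def Qgt (π : O) (Qall : Set (TateAlgebra n O π)) (N : ℕ) : Set (TateAlgebra n O π) :=
  {f ∈ Qall | ¬ ∃ M ≤ N, ValEq π (f : MvPowerSeries (Fin n) O) M}

/-- The set `π^a · S` for `S` a set of Tate series. -/
noncomputable def piPowMulSet (π : O) (a : ℕ) (S : Set (TateAlgebra n O π)) :
    Set (TateAlgebra n O π) :=
  (fun g => monTA π (a, 0) * g) '' S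

/-- The set `π^{-N} · S` (those `g` with `π^N g ∈ S`). -/
def piPowDivSet (π : O) (N : ℕ) (S : Set (TateAlgebra n O π)) :
    Set (TateAlgebra n O π) :=
  {g | ∃ f ∈ S, (f : MvPowerSeries (Fin n) O) =
    (π ^ N) • (g : MvPowerSeries (Fin n) O)}


/-!
By cancelling `π^N`, `Ī_N` is the image under reduction mod `π` of the ideal
`{h | π^N h ∈ I}`; as reduction is a surjective ring map, this is an ideal of `k[X]`.
If `π^{N+1} h ∈ I`, the hypothesis writes `π^{N+1} h` as a combination of the `π^{N+1} ν(q)`,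
`q ∈ Q_{≤N+1}`, and of elements of `Q_{>N+1}`, which are divisible by `π^{N+2}`. Cancelling
`π^{N+1}` expresses `h` as a combination of the `ν(q)` plus a multiple of `π`, so its reduction
lies in `⟨ρ(Q_{≤N+1})⟩`. Conversely, `q ∈ Q_{≤N+1}` of valuation `M` gives
`π^{N+1-M} q = π^{N+1} ν(q) ∈ I`, so `ρ(q) ∈ Ī_{N+1}`.
-/

namespace TateStmt

section Reduction

variable {n : ℕ} {O A : Type*} [CommRing O] [CommRing A]

lemma isTate_coe (π : O) (p : MvPolynomial (Fin n) O) :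
    IsTate π (p : MvPowerSeries (Fin n) O) := fun N =>
  p.support.finite_toSet.subset fun i hi => by
    by_contra hi'
    refine hi ?_
    rw [MvPolynomial.coeff_coe, MvPolynomial.notMem_support_iff.1 hi']
    exact dvd_zero _

lemma isTate_of_pow_smul [IsDomain O] {π : O} (hπ : π ≠ 0) {a : ℕ}
    {g : MvPowerSeries (Fin n) O} (h : IsTate π (π ^ a • g)) : IsTate π g := fun N =>
  (h (N + a)).subset fun i hi hdvd => hi <| (mul_dvd_mul_iff_left (pow_ne_zero a hπ)).1 <| by
    rwa [map_smul, smul_eq_mul, pow_add, mul_comm] at hdvd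

lemma coe_monTA_mul (π : O) (a : ℕ) (x : TateAlgebra n O π) :
    ((monTA π (a, 0) * x : TateAlgebra n O π) : MvPowerSeries (Fin n) O) =
      π ^ a • (x : MvPowerSeries (Fin n) O) := by
  change MvPowerSeries.monomial 0 (π ^ a) * _ = _
  rw [MvPowerSeries.monomial_zero_eq_C_apply, MvPowerSeries.smul_eq_C_mul]

lemma monTA_mul_left_injective [IsDomain O] {π : O} (hπ : π ≠ 0) (a : ℕ) :
    Function.Injective (monTA π (a, 0) * · : TateAlgebra n O π → TateAlgebra n O π) := by
  intro x y h
  ext i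
  have hi := congrArg
    (fun z : TateAlgebra n O π => MvPowerSeries.coeff i (z : MvPowerSeries (Fin n) O)) h
  simp only [coe_monTA_mul, map_smul, smul_eq_mul] at hi
  exact mul_left_cancel₀ (pow_ne_zero a hπ) hi

lemma exists_eq_monTA_mul_of_dvdAll [IsDomain O] {π : O} (hπ : π ≠ 0) {a : ℕ}
    {f : TateAlgebra n O π} (hf : DvdAll π a (f : MvPowerSeries (Fin n) O)) :
    ∃ g : TateAlgebra n O π, f = monTA π (a, 0) * g := by
  obtain ⟨g, hfg⟩ :
      ∃ g : MvPowerSeries (Fin n) O, (f : MvPowerSeries (Fin n) O) = π ^ a • g := by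
    refine ⟨fun i => (hf i).choose, ?_⟩
    ext i
    exact (hf i).choose_spec
  refine ⟨⟨g, isTate_of_pow_smul hπ (hfg ▸ f.2)⟩, Subtype.ext ?_⟩
  rw [coe_monTA_mul]
  exact hfg

variable (π : O) {φ : O →+* A} (hφ : φ π = 0)

noncomputable def reductionPoly (f : TateAlgebra n O π) : MvPolynomial (Fin n) A :=
  AddMonoidAlgebra.ofCoeff <| Finsupp.onFinset (f.2 1).toFinset
    (fun i => φ (MvPowerSeries.coeff i (f : MvPowerSeries (Fin n) O))) fun i hi => by
      rw [Set.Finite.mem_toFinset]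
      rintro ⟨c, hc⟩
      exact hi (by rw [hc, map_mul, pow_one, hφ, zero_mul])

lemma coe_reductionPoly (f : TateAlgebra n O π) :
    (reductionPoly π hφ f : MvPowerSeries (Fin n) A) =
      MvPowerSeries.map φ (f : MvPowerSeries (Fin n) O) := by
  ext i
  rw [MvPolynomial.coeff_coe, MvPowerSeries.coeff_map]
  rfl

/-- Reduction modulo `π`; the paper's `ρ(f)` is the reduction of `ν(f)`. -/
noncomputable def tateReduction : TateAlgebra n O π →+* MvPolynomial (Fin n) A where
  toFun := reductionPoly π hφ
  map_one' := MvPolynomial.coe_inj.1 <| by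
    rw [coe_reductionPoly, MvPolynomial.coe_one, OneMemClass.coe_one, map_one]
  map_mul' f g := MvPolynomial.coe_inj.1 <| by
    rw [coe_reductionPoly, MvPolynomial.coe_mul, coe_reductionPoly, coe_reductionPoly,
      MulMemClass.coe_mul, map_mul]
  map_zero' := MvPolynomial.coe_inj.1 <| by
    rw [coe_reductionPoly, MvPolynomial.coe_zero, ZeroMemClass.coe_zero, map_zero]
  map_add' f g := MvPolynomial.coe_inj.1 <| by
    rw [coe_reductionPoly, MvPolynomial.coe_add, coe_reductionPoly, coe_reductionPoly,
      AddMemClass.coe_add, map_add]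

lemma coeff_tateReduction (f : TateAlgebra n O π) (i : Fin n →₀ ℕ) :
    MvPolynomial.coeff i (tateReduction π hφ f) =
      φ (MvPowerSeries.coeff i (f : MvPowerSeries (Fin n) O)) :=
  rfl

lemma tateReduction_surjective (hsurj : Function.Surjective φ) :
    Function.Surjective (tateReduction (n := n) π hφ) := by
  intro P
  obtain ⟨p, rfl⟩ := MvPolynomial.map_surjective φ hsurj P
  refine ⟨⟨p, isTate_coe π p⟩, MvPolynomial.ext _ _ fun i => ?_⟩
  rw [coeff_tateReduction, MvPolynomial.coeff_coe, MvPolynomial.coeff_map]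

end Reduction

section Valuation

variable {n : ℕ} {O : Type*} [CommRing O] {π : O} {f : MvPowerSeries (Fin n) O}

lemma ValEq.unique {a b : ℕ} (ha : ValEq π f a) (hb : ValEq π f b) : a = b := by
  by_contra hne
  rcases Nat.lt_or_gt_of_ne hne with h | h
  · exact ha.2 fun i => (pow_dvd_pow π h).trans (hb.1 i)
  · exact hb.2 fun i => (pow_dvd_pow π h).trans (ha.1 i)

lemma ValEq.ne_zero {a : ℕ} (h : ValEq π f a) : f ≠ 0 := by
  rintro rfl
  exact h.2 fun i => by rw [map_zero]; exact dvd_zero _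

lemma dvdAll_succ_of_forall_not_valEq {N : ℕ} (h : ∀ M ≤ N, ¬ ValEq π f M) :
    DvdAll π (N + 1) f := by
  suffices ∀ M ≤ N + 1, DvdAll π M f from this _ le_rfl
  intro M hM
  induction M with
  | zero => exact fun i => by rw [pow_zero]; exact one_dvd _
  | succ M ih => by_contra hM'; exact h M (by omega) ⟨ih (by omega), hM'⟩

lemma valEq_pow_smul_iff [IsDomain O] (hπ : π ≠ 0) {a : ℕ} {g : MvPowerSeries (Fin n) O} :
    ValEq π (π ^ a • g) a ↔ ∃ i, ¬ π ∣ MvPowerSeries.coeff i g := by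
  simp only [ValEq, DvdAll, map_smul, smul_eq_mul, pow_succ, mul_dvd_mul_iff_left
    (pow_ne_zero a hπ), dvd_mul_right, implies_true, true_and, not_forall]

lemma dvdAll_monTA_mul (π : O) (a : ℕ) (x : TateAlgebra n O π) :
    DvdAll π a ((monTA π (a, 0) * x : TateAlgebra n O π) : MvPowerSeries (Fin n) O) := by
  intro i
  rw [coe_monTA_mul, map_smul, smul_eq_mul]
  exact dvd_mul_right _ _

end Valuation

section Residue

variable {n : ℕ} {O k : Type*} [CommRing O] [IsDomain O] [Field k] {π : O} {φ : O →+* k}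

lemma isRho_tateReduction (hπ : π ≠ 0) (hφ : φ π = 0) {f : MvPowerSeries (Fin n) O}
    {g : TateAlgebra n O π} {a : ℕ} (hval : ValEq π f a)
    (hfg : f = π ^ a • (g : MvPowerSeries (Fin n) O)) :
    IsRho π φ f (tateReduction π hφ g) := by
  subst hfg
  exact ⟨a, g, rfl, (valEq_pow_smul_iff hπ).1 hval, coeff_tateReduction π hφ g⟩

lemma barIdeal_eq_map_colon (hπ : π ≠ 0) (hφ : φ π = 0) (hsurj : Function.Surjective φ)
    (I : Ideal (TateAlgebra n O π)) (N : ℕ) :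
    BarIdeal π φ I N = ((I.colon {monTA π (N, 0)}).map (tateReduction π hφ) : Set _) := by
  ext P
  rw [SetLike.mem_coe, Ideal.mem_map_iff_of_surjective _ (tateReduction_surjective π hφ hsurj)]
  simp only [Submodule.mem_colon_singleton, smul_eq_mul]
  constructor
  · rintro ⟨f, hfI, g, hfg, hP⟩
    let h : TateAlgebra n O π := ⟨g, isTate_of_pow_smul hπ (hfg ▸ f.2)⟩
    have hf : f = monTA π (N, 0) * h := Subtype.ext (by rw [coe_monTA_mul]; exact hfg)
    refine ⟨h, by rwa [mul_comm, ← hf], MvPolynomial.ext _ _ fun i => ?_⟩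
    rw [coeff_tateReduction, hP]
  · rintro ⟨h, hhI, rfl⟩
    exact ⟨_, hhI, h, by rw [mul_comm, coe_monTA_mul], coeff_tateReduction π hφ h⟩

lemma rhoSet_qle_subset_barIdeal (hπ : π ≠ 0) {I : Ideal (TateAlgebra n O π)}
    {Qall : Set (TateAlgebra n O π)} (hQI : ∀ f ∈ Qall, f ∈ I) (N : ℕ) :
    rhoSet π φ (Qle π Qall N) ⊆ BarIdeal π φ I N := by
  rintro P ⟨q, ⟨hqQ, M', hM', hval'⟩, M, g, hqg, hg, hP⟩
  have hM : M = M' := ((valEq_pow_smul_iff hπ).2 hg).unique (hqg ▸ hval')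
  refine ⟨monTA π (N - M, 0) * q, I.mul_mem_left _ (hQI q hqQ), g, ?_, hP⟩
  rw [coe_monTA_mul, hqg, smul_smul, ← pow_add, Nat.sub_add_cancel (hM ▸ hM')]

lemma span_piPowMulSet_union_qgt_le (hπ : π ≠ 0) (hφ : φ π = 0)
    {Qall : Set (TateAlgebra n O π)}
    {nu : TateAlgebra n O π → TateAlgebra n O π}
    (hnu : ∀ f ∈ Qall, f ≠ 0 → ∃ N : ℕ, ValEq π (f : MvPowerSeries (Fin n) O) N ∧
      (f : MvPowerSeries (Fin n) O) = (π ^ N) • ((nu f : TateAlgebra n O π) :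
        MvPowerSeries (Fin n) O)) (N : ℕ) :
    Ideal.span (piPowMulSet π (N + 1) (nu '' Qle π Qall (N + 1)) ∪ Qgt π Qall (N + 1)) ≤
      Ideal.span {monTA π (N + 1, 0)} *
        (Ideal.span (rhoSet π φ (Qle π Qall (N + 1)))).comap (tateReduction π hφ) := by
  refine Ideal.span_le.2 ?_
  rintro s (⟨_, ⟨q, hq, rfl⟩, rfl⟩ | ⟨-, hs⟩)
  · refine Ideal.mem_span_singleton_mul.2 ⟨nu q, Ideal.subset_span ⟨q, hq, ?_⟩, rfl⟩
    obtain ⟨hqQ, M, -, hval⟩ := hq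
    obtain ⟨M', hval', hq'⟩ := hnu q hqQ fun h => hval.ne_zero (by rw [h]; rfl)
    exact isRho_tateReduction hπ hφ hval' hq'
  · obtain ⟨t, rfl⟩ := exists_eq_monTA_mul_of_dvdAll hπ
      (dvdAll_succ_of_forall_not_valEq fun M hM hval => hs ⟨M, hM, hval⟩)
    refine Ideal.mem_span_singleton_mul.2 ⟨monTA π (1, 0) * t, ?_, ?_⟩
    · have hred : tateReduction π hφ (monTA π (1, 0) * t) = 0 := by
        ext i
        rw [coeff_tateReduction, coe_monTA_mul, map_smul, smul_eq_mul, map_mul, pow_one, hφ,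
          zero_mul, MvPolynomial.coeff_zero]
      rw [Ideal.mem_comap, hred]
      exact Ideal.zero_mem _
    · refine Subtype.ext ?_
      rw [coe_monTA_mul, coe_monTA_mul, coe_monTA_mul, smul_smul, ← pow_add]

end Residue

end TateStmt

/-- (c) at level `N` implies (d) at level `N+1`: if
`I_{N+1} = ⟨π^{N+1} ν(Q_{≤N+1}), Q_{>N+1}⟩` in `K{X}°`, then dividing by `π^{N+1}` and
reducing modulo `π` yields `Ī_{N+1} = ⟨ρ(Q_{≤N+1})⟩` as an ideal of `k[X]`. -/
theorem statement_17 (π : O) (hπ : Irreducible π) (φ : O →+* k)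
    (hsurj : Function.Surjective φ) (hker : RingHom.ker φ = Ideal.span {π})
    (I : Ideal (TateAlgebra n O π)) (Qall : Set (TateAlgebra n O π))
    (hQI : ∀ f ∈ Qall, f ∈ I)
    (nu : TateAlgebra n O π → TateAlgebra n O π)
    (hnu : ∀ f ∈ Qall, f ≠ 0 → ∃ N : ℕ, ValEq π (f : MvPowerSeries (Fin n) O) N ∧
      (f : MvPowerSeries (Fin n) O) = (π ^ N) • ((nu f : TateAlgebra n O π) :
        MvPowerSeries (Fin n) O))
    (N : ℕ)
    (hc : {h : TateAlgebra n O π | h ∈ I ∧ DvdAll π (N + 1) (h : MvPowerSeries (Fin n) O)} =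
      ((Ideal.span (piPowMulSet π (N + 1) (nu '' Qle π Qall (N + 1)) ∪ Qgt π Qall (N + 1)) :
        Ideal (TateAlgebra n O π)) : Set (TateAlgebra n O π))) :
    BarIdeal π φ I (N + 1) =
      ((Ideal.span (rhoSet π φ (Qle π Qall (N + 1))) :
        Ideal (MvPolynomial (Fin n) k)) : Set (MvPolynomial (Fin n) k)) := by
  have hπ0 : π ≠ 0 := hπ.ne_zero
  have hφ : φ π = 0 := RingHom.mem_ker.1 (hker ▸ Ideal.mem_span_singleton_self π)
  have hbar := barIdeal_eq_map_colon hπ0 hφ hsurj I (N + 1)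
  rw [hbar, SetLike.coe_set_eq]
  refine le_antisymm (Ideal.map_le_iff_le_comap.2 fun h hh => ?_) ?_
  · rw [Submodule.mem_colon_singleton, smul_eq_mul, mul_comm] at hh
    have hgen : monTA π (N + 1, 0) * h ∈ Ideal.span
        (piPowMulSet π (N + 1) (nu '' Qle π Qall (N + 1)) ∪ Qgt π Qall (N + 1)) :=
      (Set.ext_iff.1 hc _).1 ⟨hh, dvdAll_monTA_mul π (N + 1) h⟩
    obtain ⟨z, hz, hzh⟩ :=
      Ideal.mem_span_singleton_mul.1 (span_piPowMulSet_union_qgt_le hπ0 hφ hnu N hgen)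
    rwa [← monTA_mul_left_injective hπ0 _ hzh]
  · exact Ideal.span_le.2 (hbar ▸ rhoSet_qle_subset_barIdeal hπ0 hQI (N + 1))
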